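/- A structural matrix X ∈ {0,*}^{n×m} satisfies condition (G₀) — for every non-empty V ⊆ [1;n] there is a column v with |V ∩ NZR(v)| = 1 — if and only if every real matrix M with the non-zero structure of X has full row rank n. -/

import Mathlib

/-!
If `∑ᵢ gᵢ Mᵢ = 0` is a non-trivial relation between the rows of `M`, condition (G₀) applied
to the support `V` of `g` gives a column in which exactly one row of `V` is non-zero, and
the relation read in that column becomes `g_j M_{j v} = 0`, which is absurd. Conversely, if
some non-empty `V` meets every column in `0` or at least `2` rows, the non-zero entries of
the rows of `V` can be chosen column by column to sum to zero (all `1` except one entry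
`1 - k`), so the rows of `V` add up to `0` while the pattern of `X` is kept.
-/

open Matrix Finset

theorem Matrix.rank_eq_card_iff_linearIndependent_row {K m n : Type*} [Field K] [Fintype m]
    [Fintype n] (M : Matrix m n K) : M.rank = Fintype.card m ↔ LinearIndependent K M.row := by
  rw [M.rank_eq_finrank_span_row, linearIndependent_iff_card_eq_finrank_span, Set.finrank,
    eq_comm]

theorem Matrix.linearIndependent_row_of_forall_exists_card_filter_ne_zero_eq_one
    {R m n : Type*} [Ring R] [NoZeroDivisors R] [DecidableEq R] [Fintype m] (M : Matrix m n R)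
    (hM : ∀ V : Finset m, V.Nonempty → ∃ v, (V.filter (fun i => M i v ≠ 0)).card = 1) :
    LinearIndependent R M.row := by
  rw [Fintype.linearIndependent_iff]
  intro g hg
  by_contra! hg_ne
  set V := univ.filter (fun i => g i ≠ 0)
  obtain ⟨v, hv⟩ := hM V (by simpa [V, Finset.Nonempty] using hg_ne)
  obtain ⟨j, hj⟩ := card_eq_one.mp hv
  have mem_iff : ∀ i, g i ≠ 0 ∧ M i v ≠ 0 ↔ i = j := fun i => by
    simpa [V] using congrArg (i ∈ ·) hj
  have h_col : ∑ i, g i * M i v = g j * M j v :=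
    sum_eq_single j (fun i _ hij => by
      by_contra h
      exact hij ((mem_iff i).mp ⟨left_ne_zero_of_mul h, right_ne_zero_of_mul h⟩)) (by simp)
  have h_zero : ∑ i, g i * M i v = 0 := by simpa using congrFun hg v
  obtain ⟨hgj, hMj⟩ := (mem_iff j).mpr rfl
  exact mul_ne_zero hgj hMj (h_col ▸ h_zero)

theorem Finset.exists_forall_ne_zero_sum_eq_zero {ι R : Type*} [DecidableEq ι] [Ring R]
    [CharZero R] (s : Finset ι) (hs : s.card ≠ 1) :
    ∃ w : ι → R, (∀ i, w i ≠ 0) ∧ ∑ i ∈ s, w i = 0 := by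
  rcases s.eq_empty_or_nonempty with rfl | ⟨a, ha⟩
  · exact ⟨1, fun _ => one_ne_zero, sum_empty⟩
  refine ⟨Function.update 1 a (1 - s.card), fun i => ?_, ?_⟩
  · rcases eq_or_ne i a with rfl | hia
    · rw [Function.update_self, sub_ne_zero]
      exact_mod_cast hs.symm
    · simp [hia]
  · rw [sum_update_of_mem ha, Pi.one_def, sum_const, card_sdiff_of_subset
      (singleton_subset_iff.mpr ha), card_singleton, nsmul_one,
      Nat.cast_sub (card_pos.mpr ⟨a, ha⟩)]
    simp

theorem exists_matrix_pattern_sum_rows_eq_zero {R m n : Type*} [Ring R] [CharZero R]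
    [DecidableEq m] (X : Matrix m n Bool) (V : Finset m)
    (hV : ∀ v, (V.filter (fun i => X i v = true)).card ≠ 1) :
    ∃ M : Matrix m n R, (∀ i j, M i j ≠ 0 ↔ X i j = true) ∧ ∑ i ∈ V, M.row i = 0 := by
  choose w hw_ne hw_sum using fun v =>
    (V.filter (fun i => X i v = true)).exists_forall_ne_zero_sum_eq_zero (R := R) (hV v)
  refine ⟨fun i v => if X i v = true then w v i else 0, fun i v => ?_, ?_⟩
  · by_cases h : X i v = true <;> simp [h, hw_ne]
  · ext v
    simpa [Matrix.row, sum_ite, Finset.sum_apply] using hw_sum v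

/-- `X` satisfies condition (G₀) iff every real matrix with the non-zero
structure of `X` has full row rank `n`. -/
theorem G0_iff_full_rank (n m : ℕ) (X : Matrix (Fin n) (Fin m) Bool) :
    (∀ V : Finset (Fin n), V.Nonempty →
      ∃ v : Fin m, (V.filter (fun i => X i v = true)).card = 1)
    ↔ (∀ M : Matrix (Fin n) (Fin m) ℝ,
        (∀ i j, M i j ≠ 0 ↔ X i j = true) → M.rank = n) := by
  refine ⟨fun hG M hM => ?_, fun hR V hV => ?_⟩
  · have h := M.linearIndependent_row_of_forall_exists_card_filter_ne_zero_eq_one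
      (by simpa only [hM] using hG)
    simpa using M.rank_eq_card_iff_linearIndependent_row.mpr h
  · by_contra! hV_bad
    obtain ⟨M, hM, hM_sum⟩ := exists_matrix_pattern_sum_rows_eq_zero (R := ℝ) X V hV_bad
    have h_indep := M.rank_eq_card_iff_linearIndependent_row.mp (by simpa using hR M hM)
    obtain ⟨i, hi⟩ := hV
    exact one_ne_zero (linearIndependent_iff'.mp h_indep V 1 (by simpa using hM_sum) i hi)
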